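/- Let ε, δ > 0 and 𝒪_εδ = 𝔦_δ × 𝔦_ε × 𝔦_δ ⊂ ℝ³. Let v(x) = 𝐚 + ℛ ∧ (x − (ε/2)𝐞₁) and w(x) = 𝐚′ + ℛ′ ∧ (x + (ε/2)𝐞₁) be rigid displacements, with 𝐚, ℛ, 𝐚′, ℛ′ ∈ ℝ³. Then 𝐮 = v − w satisfies the exact identity ‖𝐮‖²_{L²(𝒪_εδ)} = εδ² ( |𝐚₁−𝐚′₁|² + |𝐚₂−𝐚′₂−(ε/2)(ℛ₃+ℛ′₃)|² + |𝐚₃−𝐚′₃+(ε/2)(ℛ₂+ℛ′₂)|² + (δ²/6)|ℛ₂−ℛ′₂|² + ((ε²+δ²)/12)|ℛ₃−ℛ′₃|² + ((δ²+ε²)/12)|ℛ₁−ℛ′₁|² ). -/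

import Mathlib

open MeasureTheory Set Filter Topology
open scoped ENNReal

noncomputable section

/-- Points of the plane. -/
abbrev V2 : Type := Fin 2 → ℝ
/-- Points of space. -/
abbrev V3 : Type := Fin 3 → ℝ

/-- Partial derivative of a function on the plane. -/
def pd2 (f : V2 → ℝ) (i : Fin 2) (x : V2) : ℝ := fderiv ℝ f x (Pi.single i 1)
/-- Partial derivative of a function on space. -/
def pd3 (f : V3 → ℝ) (i : Fin 3) (x : V3) : ℝ := fderiv ℝ f x (Pi.single i 1)

/-- Linearized strain tensor `e(u)_{ij} = (∂_i u_j + ∂_j u_i)/2`. -/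
def strain (u : V3 → V3) (i j : Fin 3) (x : V3) : ℝ :=
  (pd3 (fun y => u y j) i x + pd3 (fun y => u y i) j x) / 2

/-- Frobenius norm of the strain tensor. -/
def strainNorm (u : V3 → V3) (x : V3) : ℝ :=
  Real.sqrt (∑ i : Fin 3, ∑ j : Fin 3, (strain u i j x) ^ 2)

/-- Open rectangle `(a,b) × (c,d)` of the plane. -/
def rect2 (a b c d : ℝ) : Set V2 := {x | x 0 ∈ Ioo a b ∧ x 1 ∈ Ioo c d}
/-- `S × (a,b)` as a subset of space. -/
def prism (S : Set V2) (a b : ℝ) : Set V3 := {x | (![x 0, x 1] : V2) ∈ S ∧ x 2 ∈ Ioo a b}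

def ωset (L : ℝ) : Set V2 := rect2 0 L 0 L
def ωδset (L δ : ℝ) : Set V2 := rect2 (-δ/2) (L+δ/2) (-δ/2) (L+δ/2)
def Ωδset (L δ : ℝ) : Set V3 := prism (ωδset L δ) (-δ/2) (δ/2)
/-- The rigid square `ω^H_{pq}`. -/
def hardSq (ε δ : ℝ) (p q : ℤ) : Set V2 :=
  rect2 (p*ε+δ/2) ((p+1)*ε-δ/2) (q*ε+δ/2) ((q+1)*ε-δ/2)
/-- Union of the rigid squares `ω^H_{εδ}`. -/
def ωH (ε δ : ℝ) (N : ℕ) : Set V2 :=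
  ⋃ p ∈ Finset.range N, ⋃ q ∈ Finset.range N, hardSq ε δ (p : ℤ) (q : ℤ)
/-- The rigid part `Ω^H_{εδ}`. -/
def ΩH (ε δ : ℝ) (N : ℕ) : Set V3 := prism (ωH ε δ N) (-δ/2) (δ/2)
/-- The elastic (soft) part `Ω^S_{εδ}`. -/
def ΩS (L ε δ : ℝ) (N : ℕ) : Set V3 := Ωδset L δ \ closure (ΩH ε δ N)
def ωS (L ε δ : ℝ) (N : ℕ) : Set V2 := ωδset L δ \ closure (ωH ε δ N)
/-- The 1-dimensional set `γ`. -/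
def γset (l : ℝ) : Set V2 :=
  {x | x 0 = 0 ∧ x 1 ∈ Ioo 0 l} ∪ {x | x 1 = 0 ∧ x 0 ∈ Ioo 0 l}
def γδset (l δ : ℝ) : Set V2 :=
  rect2 (-δ/2) (δ/2) (-δ/2) (l-δ/2) ∪ rect2 (-δ/2) (l-δ/2) (-δ/2) (δ/2)
/-- The clamped part of the boundary `Γ_δ`. -/
def Γδset (l δ : ℝ) : Set V3 := prism (γδset l δ) (-δ/2) (δ/2)

/-- `L²` norm over a set. -/
def L2n {α : Type*} [MeasureSpace α] (f : α → ℝ) (S : Set α) : ℝ≥0∞ :=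
  eLpNorm f 2 (volume.restrict S)
/-- `L²` norm of a vector-valued map over a set. -/
def L2v {α : Type*} {E : Type*} [MeasureSpace α] [NormedAddCommGroup E]
    (f : α → E) (S : Set α) : ℝ≥0∞ :=
  eLpNorm f 2 (volume.restrict S)

/-- `E(u) = ‖e(u)‖_{L²(Ω_δ)}`. -/
def En (L δ : ℝ) (u : V3 → V3) : ℝ≥0∞ := L2n (strainNorm u) (Ωδset L δ)

/-- `u ∈ H¹(S)³` (with everywhere-defined derivatives as representatives). -/
def MemH1v (u : V3 → V3) (S : Set V3) : Prop :=
  Differentiable ℝ u ∧ MemLp u 2 (volume.restrict S) ∧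
    ∀ i j : Fin 3, MemLp (fun x => pd3 (fun y => u y j) i x) 2 (volume.restrict S)

/-- `f ∈ H¹(S)` for a scalar function on the plane. -/
def MemH1s (f : V2 → ℝ) (S : Set V2) : Prop :=
  Differentiable ℝ f ∧ MemLp f 2 (volume.restrict S) ∧
    ∀ α : Fin 2, MemLp (pd2 f α) 2 (volume.restrict S)

/-- `f ∈ H²(S)` for a scalar function on the plane. -/
def MemH2s (f : V2 → ℝ) (S : Set V2) : Prop :=
  MemH1s f S ∧ (∀ α : Fin 2, Differentiable ℝ (pd2 f α)) ∧
    ∀ α β : Fin 2, MemLp (pd2 (pd2 f α) β) 2 (volume.restrict S)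

/-- The structural parameters of the plate. -/
def Params (L l ε δ : ℝ) (N n : ℕ) : Prop :=
  0 < l ∧ l < L ∧ 0 < δ ∧ 3*δ < ε ∧ ε < 1 ∧ 0 < N ∧ 0 < n ∧ L = N*ε ∧ l = n*ε

/-- The strain tensor vanishes a.e. in the rigid part. -/
def StrainZeroHard (ε δ : ℝ) (N : ℕ) (u : V3 → V3) : Prop :=
  ∀ i j : Fin 3, ∀ᵐ x ∂(volume.restrict (ΩH ε δ N)), strain u i j x = 0

/-- Non-penetration conditions between consecutive rigid bodies. -/
def NonPen (ε δ : ℝ) (N : ℕ) (u : V3 → V3) : Prop :=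
  (∀ p q : ℕ, 1 ≤ p → p ≤ N - 1 → q ≤ N - 1 →
    ∀ᵐ z ∂(volume.restrict (rect2 (δ/2) (ε-δ/2) (-δ/2) (δ/2))),
      u ![p*ε + z 0, q*ε + δ/2, z 1] 1 - u ![p*ε + z 0, q*ε - δ/2, z 1] 1 ≥ -δ) ∧
  (∀ p q : ℕ, p ≤ N - 1 → 1 ≤ q → q ≤ N - 1 →
    ∀ᵐ z ∂(volume.restrict (rect2 (δ/2) (ε-δ/2) (-δ/2) (δ/2))),
      u ![p*ε + δ/2, q*ε + z 0, z 1] 0 - u ![p*ε - δ/2, q*ε + z 0, z 1] 0 ≥ -δ)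

/-- The set of admissible displacements `𝐔_{εδ}`. -/
def Uad (L l ε δ : ℝ) (N : ℕ) (u : V3 → V3) : Prop :=
  MemH1v u (Ωδset L δ) ∧
  (∀ᵐ x ∂(volume.restrict (Γδset l δ)), u x = 0) ∧
  StrainZeroHard ε δ N u ∧ NonPen ε δ N u

/-- Kirchhoff–Love decomposition of a displacement. -/
def IsKLDecomp (L ε δ : ℝ) (N : ℕ) (u : V3 → V3)
    (Um : V2 → V2) (U3 fu : V2 → ℝ) (ut : V3 → V3) : Prop :=
  (∀ α : Fin 2, MemH1s (fun x => Um x α) (ωδset L δ)) ∧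
  MemH2s U3 (ωδset L δ) ∧ MemH1s fu (ωδset L δ) ∧ MemH1v ut (Ωδset L δ) ∧
  (∀ᵐ x ∂(volume.restrict (Ωδset L δ)),
    u x = (![Um ![x 0, x 1] 0 - x 2 * pd2 U3 0 ![x 0, x 1],
             Um ![x 0, x 1] 1 - x 2 * pd2 U3 1 ![x 0, x 1],
             U3 ![x 0, x 1] + fu ![x 0, x 1]] : V3) + ut x) ∧
  (∀ᵐ x ∂(volume.restrict (ΩH ε δ N)), ut x = 0) ∧
  (∀ᵐ x' ∂(volume.restrict (ωδset L δ)),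
    (∫ t in Ioo (-δ/2) (δ/2), ut ![x' 0, x' 1, t]) = (0 : V3))

/-- Cross product on `ℝ³`. -/
def cross3 (r v : V3) : V3 :=
  ![r 1 * v 2 - r 2 * v 1, r 2 * v 0 - r 0 * v 2, r 0 * v 1 - r 1 * v 0]

/-- On each rigid inclusion, `u` is the rigid displacement `𝐚_{pq} + ℛ_{pq} ∧ x̄_{pq}`. -/
def RigidOnHard (ε δ : ℝ) (N : ℕ) (u : V3 → V3) (A R : ℤ → ℤ → V3) : Prop :=
  ∀ p q : ℕ, p < N → q < N →
    ∀ᵐ x ∂(volume.restrict (prism (hardSq ε δ (p : ℤ) (q : ℤ)) (-δ/2) (δ/2))),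
      u x = A p q + cross3 (R (p : ℤ) (q : ℤ))
        ![x 0 - ((p : ℝ) + 1/2)*ε, x 1 - ((q : ℝ) + 1/2)*ε, x 2]

/-- Extension of the rigid parameters `(𝐚_{pq}, ℛ_{pq})` to indices `{-1,…,N}²`,
with zero values near `γ`. -/
def ExtendedParams (N n : ℕ) (A R : ℤ → ℤ → V3) : Prop :=
  (∀ q : ℤ, 0 ≤ q → q ≤ (N : ℤ) - 1 →
    A (-1) q = A 0 q ∧ R (-1) q = R 0 q ∧
    A (N : ℤ) q = A ((N : ℤ)-1) q ∧ R (N : ℤ) q = R ((N : ℤ)-1) q) ∧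
  (∀ p : ℤ, -1 ≤ p → p ≤ (N : ℤ) →
    A p (-1) = A p 0 ∧ R p (-1) = R p 0 ∧
    A p (N : ℤ) = A p ((N : ℤ)-1) ∧ R p (N : ℤ) = R p ((N : ℤ)-1)) ∧
  (∀ q : ℤ, 0 ≤ q → q ≤ (n : ℤ) - 1 →
    A (-1) q = 0 ∧ R (-1) q = 0 ∧ A 0 q = 0 ∧ R 0 q = 0) ∧
  (∀ p : ℤ, -1 ≤ p → p ≤ (n : ℤ) - 1 →
    A p (-1) = 0 ∧ R p (-1) = 0 ∧ A p 0 = 0 ∧ R p 0 = 0)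

/-- `Q1` (bilinear) interpolation on the grid `εℤ²` of nodal values `a`. -/
def q1 (ε : ℝ) (a : ℤ → ℤ → ℝ) (x : V2) : ℝ :=
  (1-(x 0/ε - ⌊x 0/ε⌋))*(1-(x 1/ε - ⌊x 1/ε⌋))*a ⌊x 0/ε⌋ ⌊x 1/ε⌋
  + (x 0/ε - ⌊x 0/ε⌋)*(1-(x 1/ε - ⌊x 1/ε⌋))*a (⌊x 0/ε⌋+1) ⌊x 1/ε⌋
  + (1-(x 0/ε - ⌊x 0/ε⌋))*(x 1/ε - ⌊x 1/ε⌋)*a ⌊x 0/ε⌋ (⌊x 1/ε⌋+1)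
  + (x 0/ε - ⌊x 0/ε⌋)*(x 1/ε - ⌊x 1/ε⌋)*a (⌊x 0/ε⌋+1) (⌊x 1/ε⌋+1)

/-- The field `ℛ◇`. -/
def Rdia (ε : ℝ) (R : ℤ → ℤ → V3) (x : V2) : V3 := fun i => q1 ε (fun p q => R p q i) x
/-- The field `𝒰◇`. -/
def Udia (ε : ℝ) (A : ℤ → ℤ → V3) (x : V2) : V3 := fun i => q1 ε (fun p q => A p q i) x

/-- Index of the cell `[pε-δ/2, (p+1)ε-δ/2)` containing `t`. -/
def nodeIdx (ε δ t : ℝ) : ℤ := ⌊(t + δ/2)/ε⌋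
/-- One-dimensional interpolation weight across the rods. -/
def nodeW (ε δ t : ℝ) : ℝ := min 1 ((δ + 2*(t - nodeIdx ε δ t * ε))/(2*δ))
/-- Piecewise interpolated field built from the family `a : ℤ → ℤ → ℝ`
(constant on the rigid squares, linear across the rods, bilinear at crossings). -/
def pwField (ε δ : ℝ) (a : ℤ → ℤ → ℝ) (x : V2) : ℝ :=
  (1-nodeW ε δ (x 0))*(1-nodeW ε δ (x 1))*a (nodeIdx ε δ (x 0)-1) (nodeIdx ε δ (x 1)-1)
  + nodeW ε δ (x 0)*(1-nodeW ε δ (x 1))*a (nodeIdx ε δ (x 0)) (nodeIdx ε δ (x 1)-1)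
  + (1-nodeW ε δ (x 0))*nodeW ε δ (x 1)*a (nodeIdx ε δ (x 0)-1) (nodeIdx ε δ (x 1))
  + nodeW ε δ (x 0)*nodeW ε δ (x 1)*a (nodeIdx ε δ (x 0)) (nodeIdx ε δ (x 1))

def snapHi (ε δ t : ℝ) : ℝ := max t (nodeIdx ε δ t * ε + δ/2)
def snapLo (ε δ t : ℝ) : ℝ := min t (nodeIdx ε δ t * ε - δ/2)

/-- In-plane rigid displacement associated to the inclusion `(p,q)`. -/
def rigidMap (ε : ℝ) (A R : ℤ → ℤ → V3) (p q : ℤ) (y : V2) : V3 :=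
  A p q + cross3 (R p q) ![y 0 - ((p : ℝ) + 1/2)*ε, y 1 - ((q : ℝ) + 1/2)*ε, 0]

/-- The field `ℛ`. -/
def Rpw (ε δ : ℝ) (R : ℤ → ℤ → V3) (x : V2) : V3 :=
  fun i => pwField ε δ (fun p q => R p q i) x

/-- The field `𝒰` : `Q1` interpolation of the rigid displacements of the inclusions. -/
def Upw (ε δ : ℝ) (A R : ℤ → ℤ → V3) (x : V2) : V3 :=
  ((1-nodeW ε δ (x 0))*(1-nodeW ε δ (x 1))) •
    rigidMap ε A R (nodeIdx ε δ (x 0)-1) (nodeIdx ε δ (x 1)-1)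
      ![snapLo ε δ (x 0), snapLo ε δ (x 1)]
  + (nodeW ε δ (x 0)*(1-nodeW ε δ (x 1))) •
    rigidMap ε A R (nodeIdx ε δ (x 0)) (nodeIdx ε δ (x 1)-1)
      ![snapHi ε δ (x 0), snapLo ε δ (x 1)]
  + ((1-nodeW ε δ (x 0))*nodeW ε δ (x 1)) •
    rigidMap ε A R (nodeIdx ε δ (x 0)-1) (nodeIdx ε δ (x 1))
      ![snapLo ε δ (x 0), snapHi ε δ (x 1)]
  + (nodeW ε δ (x 0)*nodeW ε δ (x 1)) •
    rigidMap ε A R (nodeIdx ε δ (x 0)) (nodeIdx ε δ (x 1))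
      ![snapHi ε δ (x 0), snapHi ε δ (x 1)]

/-- The field `𝒰▲_α`. -/
def Utri (ε δ : ℝ) (A : ℤ → ℤ → V3) (α : Fin 2) (x : V2) : ℝ :=
  pwField ε δ (fun p q => A p q (Fin.ofNat 3 (α : ℕ))) x

/-- Reference cells. -/
def Y1 : Set V2 := {y | y 0 ∈ Ioo (0:ℝ) 1 ∧ y 1 ∈ Ioo (-(1:ℝ)/2) (1/2)}
def Y2 : Set V2 := {y | y 0 ∈ Ioo (-(1:ℝ)/2) (1/2) ∧ y 1 ∈ Ioo (0:ℝ) 1}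
def cY1 : Set V3 :=
  {y | y 0 ∈ Ioo (0:ℝ) 1 ∧ y 1 ∈ Ioo (-(1:ℝ)/2) (1/2) ∧ y 2 ∈ Ioo (-(1:ℝ)/2) (1/2)}
def cY2 : Set V3 :=
  {y | y 0 ∈ Ioo (-(1:ℝ)/2) (1/2) ∧ y 1 ∈ Ioo (0:ℝ) 1 ∧ y 2 ∈ Ioo (-(1:ℝ)/2) (1/2)}

/-- Rescaled 2D unfolding operator `𝒯^{(1)}_{εδ}`. -/
def T1 (ε δ : ℝ) (ψ : V2 → ℝ) (z : V2 × V2) : ℝ :=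
  ψ ![ε*⌊z.1 0/ε⌋ + ε * z.2 0, ε*⌊z.1 1/ε⌋ + δ * z.2 1]
/-- Rescaled 2D unfolding operator `𝒯^{(2)}_{εδ}`. -/
def T2 (ε δ : ℝ) (ψ : V2 → ℝ) (z : V2 × V2) : ℝ :=
  ψ ![ε*⌊z.1 0/ε⌋ + δ * z.2 0, ε*⌊z.1 1/ε⌋ + ε * z.2 1]
/-- Rescaled 3D unfolding operator `Π^{(1)}_{εδ}`. -/
def Pi1 (ε δ : ℝ) (ψ : V3 → ℝ) (z : V2 × V3) : ℝ :=
  ψ ![ε*⌊z.1 0/ε⌋ + ε * z.2 0, ε*⌊z.1 1/ε⌋ + δ * z.2 1, δ * z.2 2]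
/-- Rescaled 3D unfolding operator `Π^{(2)}_{εδ}`. -/
def Pi2 (ε δ : ℝ) (ψ : V3 → ℝ) (z : V2 × V3) : ℝ :=
  ψ ![ε*⌊z.1 0/ε⌋ + δ * z.2 0, ε*⌊z.1 1/ε⌋ + ε * z.2 1, δ * z.2 2]

/-- Weak convergence in `L²(S)`. -/
def WeakL2 {α : Type*} [MeasureSpace α] (S : Set α) (F : ℕ → α → ℝ) (G : α → ℝ) : Prop :=
  ∀ g : α → ℝ, MemLp g 2 (volume.restrict S) →
    Tendsto (fun k => ∫ z in S, F k z * g z) atTop (𝓝 (∫ z in S, G z * g z))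

/-- Strong convergence in `L²(S)`. -/
def StrongL2 {α : Type*} [MeasureSpace α] (S : Set α) (F : ℕ → α → ℝ) (G : α → ℝ) : Prop :=
  Tendsto (fun k => eLpNorm (fun z => F k z - G z) 2 (volume.restrict S)) atTop (𝓝 0)

/-- Sequences of parameters with `ε, δ → 0` and `δ/ε → 0`. -/
def SeqParams (L l : ℝ) (ε δ : ℕ → ℝ) (N n : ℕ → ℕ) : Prop :=
  (∀ k, Params L l (ε k) (δ k) (N k) (n k)) ∧
  Tendsto ε atTop (𝓝 0) ∧ Tendsto δ atTop (𝓝 0) ∧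
  Tendsto (fun k => δ k / ε k) atTop (𝓝 0)

/-- `H¹_γ(ω)`: `H¹` functions vanishing (`μH¹`-a.e.) on `γ`. -/
def MemH1γ (L l : ℝ) (f : V2 → ℝ) : Prop :=
  MemH1s f (ωset L) ∧
  ∀ᵐ x ∂((μH[1] : Measure V2).restrict (γset l)), f x = 0

/-- `H²_{(0,l)}((0,L))`: one-dimensional `H²` functions vanishing a.e. on `(0,l)`. -/
def MemH2zero (L l : ℝ) (f : ℝ → ℝ) : Prop :=
  Differentiable ℝ f ∧ Differentiable ℝ (deriv f) ∧
  MemLp f 2 (volume.restrict (Ioo 0 L)) ∧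
  MemLp (deriv f) 2 (volume.restrict (Ioo 0 L)) ∧
  MemLp (deriv (deriv f)) 2 (volume.restrict (Ioo 0 L)) ∧
  (∀ᵐ t ∂(volume.restrict (Ioo 0 l)), f t = 0)

/-- The macroscopic limit space `𝔻₀`. -/
def MemD0 (L l : ℝ) (W1 W2 W3 : V2 → ℝ) : Prop :=
  MemH1γ L l W1 ∧ MemH1γ L l W2 ∧ MemH2s W3 (ωset L) ∧
  ∃ F G : ℝ → ℝ, MemH2zero L l F ∧ MemH2zero L l G ∧
    ∀ᵐ x ∂(volume.restrict (ωset L)), W3 x = F (x 0) + G (x 1)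

/-- Partial derivative in the microscopic variable. -/
def pdY (f : V2 × V3 → ℝ) (k : Fin 3) (z : V2 × V3) : ℝ :=
  fderiv ℝ (fun y => f (z.1, y)) z.2 (Pi.single k 1)

/-- The space `𝐋²(ω×(0,1)_{y₁}; H¹(𝔦²))`. -/
def MemLhat1 (L : ℝ) (v : V2 × V3 → V3) : Prop :=
  (∀ i : Fin 3, MemLp (fun z => v z i) 2 (volume.restrict ((ωset L) ×ˢ cY1))) ∧
  (∀ i k : Fin 3, MemLp (fun z => pdY (fun w => v w i) k z) 2
      (volume.restrict ((ωset L) ×ˢ cY1))) ∧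
  (∀ x : V2, ∀ y1 y3 : ℝ,
    v (x, ![y1, 1/2, y3]) = 0 ∧ v (x, ![y1, -(1/2), y3]) = 0)

/-- The space `𝐋²(ω×(0,1)_{y₂}; H¹(𝔦²))`. -/
def MemLhat2 (L : ℝ) (v : V2 × V3 → V3) : Prop :=
  (∀ i : Fin 3, MemLp (fun z => v z i) 2 (volume.restrict ((ωset L) ×ˢ cY2))) ∧
  (∀ i k : Fin 3, MemLp (fun z => pdY (fun w => v w i) k z) 2
      (volume.restrict ((ωset L) ×ˢ cY2))) ∧
  (∀ x : V2, ∀ y2 y3 : ℝ,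
    v (x, ![(1:ℝ)/2, y2, y3]) = 0 ∧ v (x, ![-(1:ℝ)/2, y2, y3]) = 0)

/-- The limit strain field `E^{(1)}(𝔘, û^{(1)})`. -/
def E1mat (U1 U2 U3 : V2 → ℝ) (hu : V2 × V3 → V3) (z : V2 × V3) :
    Fin 3 → Fin 3 → ℝ :=
  ![![0, (pd2 U1 1 z.1 + pdY (fun w => hu w 0) 1 z)/2, pdY (fun w => hu w 0) 2 z / 2],
    ![(pd2 U1 1 z.1 + pdY (fun w => hu w 0) 1 z)/2,
      pd2 U2 1 z.1 - z.2 2 * pd2 (pd2 U3 1) 1 z.1 + pdY (fun w => hu w 1) 1 z,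
      (pdY (fun w => hu w 2) 1 z + pdY (fun w => hu w 1) 2 z)/2],
    ![pdY (fun w => hu w 0) 2 z / 2,
      (pdY (fun w => hu w 2) 1 z + pdY (fun w => hu w 1) 2 z)/2,
      pdY (fun w => hu w 2) 2 z]]

/-- The limit strain field `E^{(2)}(𝔘, û^{(2)})`. -/
def E2mat (U1 U2 U3 : V2 → ℝ) (hu : V2 × V3 → V3) (z : V2 × V3) :
    Fin 3 → Fin 3 → ℝ :=
  ![![pd2 U1 0 z.1 - z.2 2 * pd2 (pd2 U3 0) 0 z.1 + pdY (fun w => hu w 0) 0 z,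
      (pd2 U2 0 z.1 + pdY (fun w => hu w 1) 0 z)/2,
      (pdY (fun w => hu w 2) 0 z + pdY (fun w => hu w 0) 2 z)/2],
    ![(pd2 U2 0 z.1 + pdY (fun w => hu w 1) 0 z)/2, 0, pdY (fun w => hu w 1) 2 z / 2],
    ![(pdY (fun w => hu w 2) 0 z + pdY (fun w => hu w 0) 2 z)/2,
      pdY (fun w => hu w 1) 2 z / 2, pdY (fun w => hu w 2) 2 z]]

/-- A Hooke tensor: bounded, symmetric and uniformly coercive on `S`. -/
def Hooke (c0 : ℝ) (𝔸 : Fin 3 → Fin 3 → Fin 3 → Fin 3 → V3 → ℝ) (S : Set V3) : Prop :=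
  (∀ i j k m : Fin 3, ∃ M : ℝ, ∀ x, |𝔸 i j k m x| ≤ M) ∧
  (∀ i j k m : Fin 3, ∀ x, 𝔸 i j k m x = 𝔸 i j m k x ∧ 𝔸 i j k m x = 𝔸 k m i j x) ∧
  (∀ x ∈ S, ∀ T : Fin 3 → Fin 3 → ℝ, (∀ i j, T i j = T j i) →
    c0 * (∑ i : Fin 3, ∑ j : Fin 3, (T i j)^2) ≤
      ∑ i : Fin 3, ∑ j : Fin 3, ∑ k : Fin 3, ∑ m : Fin 3, 𝔸 i j k m x * T i j * T k m)

/-- The applied body force `f_{εδ}`. -/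
def force (L ε δ κ : ℝ) (f : V2 → V3) (x : V3) : V3 := fun i =>
  ε ^ κ * (if i = 2 then δ^2 * Set.indicator (ωset L) (fun y => f y 2) ![x 0, x 1]
    else δ * Set.indicator (ωset L) (fun y => f y i) ![x 0, x 1])

/-- The variational inequality formulation of the elasticity problem. -/
def VarIneq (L l ε δ κ : ℝ) (N : ℕ)
    (𝔸 : Fin 3 → Fin 3 → Fin 3 → Fin 3 → V3 → ℝ) (f : V2 → V3) (u : V3 → V3) : Prop :=
  ∀ v : V3 → V3, Uad L l ε δ N v →
    (∫ x in ΩS L ε δ N, ∑ i : Fin 3, ∑ j : Fin 3, ∑ k : Fin 3, ∑ m : Fin 3,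
        𝔸 i j k m x * strain u i j x * strain (fun y => u y - v y) k m x) ≤
      ∫ x in Ωδset L δ, ∑ i : Fin 3, force L ε δ κ f x i * (u x i - v x i)

/-- Microscopic partial derivative for functions of `(x', y') ∈ ℝ²×ℝ²`. -/
def pdY2 (f : V2 × V2 → ℝ) (k : Fin 2) (z : V2 × V2) : ℝ :=
  fderiv ℝ (fun y => f (z.1, y)) z.2 (Pi.single k 1)

/-- `L²(ω×(0,1)_{y₁}; H¹₀(𝔦))` (the `H¹₀` variable being `y₂`). -/
def MemH10y2 (L : ℝ) (v : V2 × V2 → ℝ) : Prop :=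
  MemLp v 2 (volume.restrict ((ωset L) ×ˢ Y1)) ∧
  MemLp (pdY2 v 1) 2 (volume.restrict ((ωset L) ×ˢ Y1)) ∧
  ∀ x : V2, ∀ y1 : ℝ, v (x, ![y1, 1/2]) = 0 ∧ v (x, ![y1, -(1/2)]) = 0

/-- `L²(ω×(0,1)_{y₂}; H¹₀(𝔦))` (the `H¹₀` variable being `y₁`). -/
def MemH10y1 (L : ℝ) (v : V2 × V2 → ℝ) : Prop :=
  MemLp v 2 (volume.restrict ((ωset L) ×ˢ Y2)) ∧
  MemLp (pdY2 v 0) 2 (volume.restrict ((ωset L) ×ˢ Y2)) ∧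
  ∀ x : V2, ∀ y2 : ℝ, v (x, ![(1:ℝ)/2, y2]) = 0 ∧ v (x, ![-(1:ℝ)/2, y2]) = 0

/-- Microscopic strain `E^{(1)}(0, v̂)` for cell (corrector) functions of `y` only. -/
def Ecell1 (v : V3 → V3) (y : V3) : Fin 3 → Fin 3 → ℝ :=
  ![![0, pd3 (fun w => v w 0) 1 y / 2, pd3 (fun w => v w 0) 2 y / 2],
    ![pd3 (fun w => v w 0) 1 y / 2, pd3 (fun w => v w 1) 1 y,
      (pd3 (fun w => v w 2) 1 y + pd3 (fun w => v w 1) 2 y)/2],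
    ![pd3 (fun w => v w 0) 2 y / 2,
      (pd3 (fun w => v w 2) 1 y + pd3 (fun w => v w 1) 2 y)/2,
      pd3 (fun w => v w 2) 2 y]]

/-- Microscopic strain `E^{(2)}(0, v̂)` for cell (corrector) functions of `y` only. -/
def Ecell2 (v : V3 → V3) (y : V3) : Fin 3 → Fin 3 → ℝ :=
  ![![pd3 (fun w => v w 0) 0 y, pd3 (fun w => v w 1) 0 y / 2,
      (pd3 (fun w => v w 2) 0 y + pd3 (fun w => v w 0) 2 y)/2],
    ![pd3 (fun w => v w 1) 0 y / 2, 0, pd3 (fun w => v w 1) 2 y / 2],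
    ![(pd3 (fun w => v w 2) 0 y + pd3 (fun w => v w 0) 2 y)/2,
      pd3 (fun w => v w 1) 2 y / 2, pd3 (fun w => v w 2) 2 y]]

/-- The matrices `M^{(1)}_r`. -/
def M1mat (r : Fin 3) (y : V3) : Fin 3 → Fin 3 → ℝ :=
  if r = 0 then ![![0, 1/2, 0], ![1/2, 0, 0], ![0, 0, 0]]
  else if r = 1 then ![![0,0,0], ![0,1,0], ![0,0,0]]
  else ![![0,0,0], ![0, -y 2, 0], ![0,0,0]]

/-- The matrices `M^{(2)}_r`. -/
def M2mat (r : Fin 3) (y : V3) : Fin 3 → Fin 3 → ℝ :=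
  if r = 0 then ![![1,0,0], ![0,0,0], ![0,0,0]]
  else if r = 1 then ![![0,1/2,0], ![1/2,0,0], ![0,0,0]]
  else ![![-y 2,0,0], ![0,0,0], ![0,0,0]]

/-- The cell space `𝐋²((0,1)_{y₁}; H¹(𝔦²))`. -/
def MemCell1 (v : V3 → V3) : Prop :=
  (∀ i : Fin 3, MemLp (fun y => v y i) 2 (volume.restrict cY1)) ∧
  (∀ i k : Fin 3, MemLp (fun y => pd3 (fun w => v w i) k y) 2 (volume.restrict cY1)) ∧
  (∀ y1 y3 : ℝ, v ![y1, 1/2, y3] = 0 ∧ v ![y1, -(1/2), y3] = 0)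

/-- The cell space `𝐋²((0,1)_{y₂}; H¹(𝔦²))`. -/
def MemCell2 (v : V3 → V3) : Prop :=
  (∀ i : Fin 3, MemLp (fun y => v y i) 2 (volume.restrict cY2)) ∧
  (∀ i k : Fin 3, MemLp (fun y => pd3 (fun w => v w i) k y) 2 (volume.restrict cY2)) ∧
  (∀ y2 y3 : ℝ, v ![(1:ℝ)/2, y2, y3] = 0 ∧ v ![-(1:ℝ)/2, y2, y3] = 0)

/-- The cell problems for the correctors `χ^{(1)}_r`. -/
def CellProb1 (𝔸1 : Fin 3 → Fin 3 → Fin 3 → Fin 3 → V3 → ℝ) (χ : Fin 3 → V3 → V3) : Prop :=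
  ∀ r : Fin 3, ∀ v : V3 → V3, MemCell1 v →
    (∫ y in cY1, ∑ i : Fin 3, ∑ j : Fin 3, ∑ k : Fin 3, ∑ m : Fin 3,
      𝔸1 i j k m y * (M1mat r y i j + Ecell1 (χ r) y i j) * Ecell1 v y k m) = 0

/-- The cell problems for the correctors `χ^{(2)}_r`. -/
def CellProb2 (𝔸2 : Fin 3 → Fin 3 → Fin 3 → Fin 3 → V3 → ℝ) (χ : Fin 3 → V3 → V3) : Prop :=
  ∀ r : Fin 3, ∀ v : V3 → V3, MemCell2 v →
    (∫ y in cY2, ∑ i : Fin 3, ∑ j : Fin 3, ∑ k : Fin 3, ∑ m : Fin 3,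
      𝔸2 i j k m y * (M2mat r y i j + Ecell2 (χ r) y i j) * Ecell2 v y k m) = 0

/-- The homogenized coefficients `𝒜^{(1)}_{rs}`. -/
def Acoef1 (𝔸1 : Fin 3 → Fin 3 → Fin 3 → Fin 3 → V3 → ℝ) (χ : Fin 3 → V3 → V3)
    (r s : Fin 3) : ℝ :=
  ∫ y in cY1, ∑ i : Fin 3, ∑ j : Fin 3, ∑ k : Fin 3, ∑ m : Fin 3,
    𝔸1 i j k m y * (M1mat r y i j + Ecell1 (χ r) y i j) *
      (M1mat s y k m + Ecell1 (χ s) y k m)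

/-- The homogenized coefficients `𝒜^{(2)}_{rs}`. -/
def Acoef2 (𝔸2 : Fin 3 → Fin 3 → Fin 3 → Fin 3 → V3 → ℝ) (χ : Fin 3 → V3 → V3)
    (r s : Fin 3) : ℝ :=
  ∫ y in cY2, ∑ i : Fin 3, ∑ j : Fin 3, ∑ k : Fin 3, ∑ m : Fin 3,
    𝔸2 i j k m y * (M2mat r y i j + Ecell2 (χ r) y i j) *
      (M2mat s y k m + Ecell2 (χ s) y k m)

/-- The macroscopic strain vector `E^{(1)}(𝔙)`. -/
def E1vec (W1 W2 W3 : V2 → ℝ) (x : V2) : Fin 3 → ℝ :=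
  ![pd2 W1 1 x, pd2 W2 1 x, pd2 (pd2 W3 1) 1 x]
/-- The macroscopic strain vector `E^{(2)}(𝔙)`. -/
def E2vec (W1 W2 W3 : V2 → ℝ) (x : V2) : Fin 3 → ℝ :=
  ![pd2 W2 0 x, pd2 W1 0 x, pd2 (pd2 W3 0) 0 x]

/-- The unfolded limit problem. -/
def UnfoldedEq (L l : ℝ) (𝔸1 𝔸2 : Fin 3 → Fin 3 → Fin 3 → Fin 3 → V3 → ℝ)
    (f : V2 → V3) (U1 U2 U3 : V2 → ℝ) (hu1 hu2 : V2 × V3 → V3) : Prop :=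
  ∀ W1 W2 W3 : V2 → ℝ, ∀ vh1 vh2 : V2 × V3 → V3,
    MemD0 L l W1 W2 W3 → MemLhat1 L vh1 → MemLhat2 L vh2 →
    (∫ z in (ωset L) ×ˢ cY1, ∑ i : Fin 3, ∑ j : Fin 3, ∑ k : Fin 3, ∑ m : Fin 3,
        𝔸1 i j k m z.2 * E1mat U1 U2 U3 hu1 z i j * E1mat W1 W2 W3 vh1 z k m)
    + (∫ z in (ωset L) ×ˢ cY2, ∑ i : Fin 3, ∑ j : Fin 3, ∑ k : Fin 3, ∑ m : Fin 3,
        𝔸2 i j k m z.2 * E2mat U1 U2 U3 hu2 z i j * E2mat W1 W2 W3 vh2 z k m)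
    = ∫ x in ωset L, ∑ i : Fin 3, f x i * (![W1 x, W2 x, W3 x] : V3) i

/-- The homogenized problem. -/
def HomogEq (L l : ℝ) (A1 A2 : Fin 3 → Fin 3 → ℝ) (f : V2 → V3)
    (U1 U2 U3 : V2 → ℝ) : Prop :=
  ∀ W1 W2 W3 : V2 → ℝ, MemD0 L l W1 W2 W3 →
    (∫ x in ωset L, ∑ r : Fin 3, ∑ s : Fin 3,
        A1 r s * E1vec U1 U2 U3 x s * E1vec W1 W2 W3 x r)
    + (∫ x in ωset L, ∑ r : Fin 3, ∑ s : Fin 3,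
        A2 r s * E2vec U1 U2 U3 x s * E2vec W1 W2 W3 x r)
    = ∫ x in ωset L, ∑ i : Fin 3, f x i * (![W1 x, W2 x, W3 x] : V3) i

/-- The interpolated derivative `dΦ_{εδ}` of Lemma B.3. -/
def dPhiE (ε δ : ℝ) (Φ : ℝ → ℝ) (t : ℝ) : ℝ :=
  if t - (nodeIdx ε δ t : ℝ)*ε ≤ δ/2
  then deriv Φ ((nodeIdx ε δ t : ℝ)*ε + (ε/δ)*(t - (nodeIdx ε δ t : ℝ)*ε))
  else deriv Φ ((nodeIdx ε δ t : ℝ)*ε + ε/2)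

/-- The interpolated function `Φ_{εδ}` of Lemma B.3. -/
def PhiE (ε δ : ℝ) (Φ : ℝ → ℝ) (t : ℝ) : ℝ := Φ 0 + ∫ s in (0:ℝ)..t, dPhiE ε δ Φ s

/-- Standard basis vectors of `ℝ³`. -/
def ee1 : V3 := ![1, 0, 0]
def ee2 : V3 := ![0, 1, 0]


lemma int1d_s4 (a b : ℝ) (hab : a ≤ b) (n : ℕ) :
    ∫ t in Set.Ioo a b, t ^ n = (b ^ (n+1) - a ^ (n+1)) / (n+1) := by
  rw [← MeasureTheory.integral_Ioc_eq_integral_Ioo, ← intervalIntegral.integral_of_le hab,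
    integral_pow]

lemma intOn1d_s4 (a b : ℝ) (n : ℕ) : IntegrableOn (fun t : ℝ => t ^ n) (Set.Ioo a b) :=
  ((continuous_pow n).integrableOn_Icc).mono_set Set.Ioo_subset_Icc_self

lemma indicator_pi_prod_s4 (s : Fin 3 → Set ℝ) (g : Fin 3 → ℝ → ℝ) (x : V3) :
    (Set.univ.pi s).indicator (fun x : V3 => ∏ i, g i (x i)) x
      = ∏ i, (s i).indicator (g i) (x i) := by
  by_cases hx : x ∈ Set.univ.pi s
  · rw [Set.indicator_of_mem hx]
    exact Finset.prod_congr rfl fun i _ =>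
      (Set.indicator_of_mem (hx i (Set.mem_univ i)) _).symm
  · rw [Set.indicator_of_notMem hx]
    simp only [Set.mem_univ_pi] at hx
    push_neg at hx
    obtain ⟨i, hi⟩ := hx
    exact (Finset.prod_eq_zero (Finset.mem_univ i) (Set.indicator_of_notMem hi _)).symm

lemma prod3_int_s4 (s : Fin 3 → Set ℝ) (hs : ∀ i, MeasurableSet (s i))
    (g : Fin 3 → ℝ → ℝ) (hg : ∀ i, IntegrableOn (g i) (s i)) :
    IntegrableOn (fun x : V3 => ∏ i, g i (x i)) (Set.univ.pi s) := by
  rw [← integrable_indicator_iff (MeasurableSet.univ_pi hs)]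
  have h := MeasureTheory.Integrable.fintype_prod (𝕜 := ℝ)
    (f := fun i => (s i).indicator (g i))
    (fun i => (integrable_indicator_iff (hs i)).2 (hg i))
  rw [show (Set.univ.pi s).indicator (fun x : V3 => ∏ i, g i (x i))
      = fun x => ∏ i, (s i).indicator (g i) (x i) from funext (indicator_pi_prod_s4 s g)]
  exact h

lemma prod3_s4 (s : Fin 3 → Set ℝ) (hs : ∀ i, MeasurableSet (s i))
    (g : Fin 3 → ℝ → ℝ) :
    ∫ x in Set.univ.pi s, ∏ i, g i (x i) = ∏ i, ∫ t in s i, g i t := by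
  rw [← MeasureTheory.integral_indicator (MeasurableSet.univ_pi hs)]
  simp_rw [indicator_pi_prod_s4 s g]
  rw [MeasureTheory.integral_fintype_prod_volume_eq_prod (ι := Fin 3)
      (f := fun i => (s i).indicator (g i))]
  exact Finset.prod_congr rfl fun i _ => MeasureTheory.integral_indicator (hs i)

/-- the exact `L²` identity (4.6) of the paper for the difference of
two rigid displacements on the box `𝒪_{εδ} = 𝔦_δ × 𝔦_ε × 𝔦_δ`. -/
theorem statement4 (ε δ : ℝ) (hε : 0 < ε) (hδ : 0 < δ) (a r a' r' : V3) :
    (∫ x in prism (rect2 (-δ/2) (δ/2) (-ε/2) (ε/2)) (-δ/2) (δ/2),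
        ∑ i : Fin 3,
          ((a + cross3 r ![x 0 - ε/2, x 1, x 2]) i
            - (a' + cross3 r' ![x 0 + ε/2, x 1, x 2]) i)^2)
    = ε * δ^2 * ((a 0 - a' 0)^2
        + (a 1 - a' 1 - ε/2*(r 2 + r' 2))^2
        + (a 2 - a' 2 + ε/2*(r 1 + r' 1))^2
        + δ^2/6*(r 1 - r' 1)^2
        + (ε^2 + δ^2)/12*(r 2 - r' 2)^2
        + (δ^2 + ε^2)/12*(r 0 - r' 0)^2) := by
  set lo : Fin 3 → ℝ := ![-δ/2, -ε/2, -δ/2] with hlo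
  set hi : Fin 3 → ℝ := ![δ/2, ε/2, δ/2] with hhi
  have hle : ∀ i : Fin 3, lo i ≤ hi i := by
    intro i; fin_cases i <;> simp [hlo, hhi] <;> linarith
  have hbox : prism (rect2 (-δ/2) (δ/2) (-ε/2) (ε/2)) (-δ/2) (δ/2)
      = Set.univ.pi (fun i => Set.Ioo (lo i) (hi i)) := by
    ext x
    simp only [prism, rect2, Set.mem_setOf_eq, Set.mem_univ_pi, Matrix.cons_val_zero,
      Matrix.cons_val_one, Matrix.head_cons]
    constructor
    · rintro ⟨⟨h0, h1⟩, h2⟩ i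
      fin_cases i <;> simpa [hlo, hhi]
    · intro h
      refine ⟨⟨?_, ?_⟩, ?_⟩
      · simpa [hlo, hhi] using h 0
      · simpa [hlo, hhi] using h 1
      · simpa [hlo, hhi] using h 2
  set A0 := a 0 - a' 0 with hA0
  set A1 := a 1 - a' 1 - ε/2*(r 2 + r' 2) with hA1
  set A2 := a 2 - a' 2 + ε/2*(r 1 + r' 1) with hA2
  set R0 := r 0 - r' 0 with hR0
  set R1 := r 1 - r' 1 with hR1
  set R2 := r 2 - r' 2 with hR2
  set ms : Fin 10 → Fin 3 → ℕ :=
    ![![0,0,0], ![1,0,0], ![0,1,0], ![0,0,1], ![2,0,0],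
      ![0,2,0], ![0,0,2], ![1,1,0], ![1,0,1], ![0,1,1]] with hms
  set cs : Fin 10 → ℝ :=
    ![A0^2+A1^2+A2^2, 2*(A1*R2 - A2*R1), 2*(A2*R0 - A0*R2), 2*(A0*R1 - A1*R0),
      R1^2+R2^2, R0^2+R2^2, R0^2+R1^2, -(2*R0*R1), -(2*R0*R2), -(2*R1*R2)] with hcs
  have hfun : ∀ x : V3,
      (∑ i : Fin 3,
          ((a + cross3 r ![x 0 - ε/2, x 1, x 2]) i
            - (a' + cross3 r' ![x 0 + ε/2, x 1, x 2]) i)^2)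
      = ∑ j : Fin 10, cs j * ∏ i, (x i) ^ (ms j i) := by
    intro x
    simp [cross3, hcs, hms, hA0, hA1, hA2, hR0, hR1, hR2,
      Fin.sum_univ_succ, Fin.prod_univ_three, Pi.add_apply]
    ring
  rw [hbox]
  simp only [hfun]
  rw [MeasureTheory.integral_finset_sum _ (fun j _ =>
    ((prod3_int_s4 _ (fun i => measurableSet_Ioo) _
      (fun i => intOn1d_s4 (lo i) (hi i) (ms j i))).const_mul (cs j)))]
  have hval : ∀ j : Fin 10,
      ∫ x in Set.univ.pi (fun i => Set.Ioo (lo i) (hi i)), cs j * ∏ i, (x i) ^ (ms j i)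
        = cs j * ∏ i, ((hi i) ^ (ms j i + 1) - (lo i) ^ (ms j i + 1)) / ((ms j i : ℝ) + 1) := by
    intro j
    rw [MeasureTheory.integral_const_mul,
      prod3_s4 _ (fun i => measurableSet_Ioo) (fun i t => t ^ (ms j i))]
    congr 1
    exact Finset.prod_congr rfl fun i _ => int1d_s4 (lo i) (hi i) (hle i) (ms j i)
  simp only [hval]
  simp only [hcs, hms, hlo, hhi, Fin.sum_univ_succ, Fin.prod_univ_three, Matrix.cons_val, Fin.succ_zero_eq_one, Fin.succ_one_eq_two, Matrix.cons_val_succ, Matrix.cons_val_zero]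
  norm_num
  ring

end
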